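/- arXiv:2405.13338 — 2 statements merged into one kernel-verified Lean document; each statement's English description precedes it below -/
import Mathlib

section
/- Let λ > 0 and T > 0, and define r(t) = (λ + 2t + λt²)/(1 + sin²t). Then for all t ∈ [0,T]: r(t) = (2t + λe^{−λt})/(1 + sin²t) + (λ/(1 + sin²t))·∫₀ᵗ (1 + sin²τ)·e^{−λ(t−τ)}·r(τ) dτ. -/
/-!
With `p(τ) = 1 + τ²` the integrand is `(p' + λp)(τ) e^{−λ(t−τ)}` once the factors `1 + sin²τ`
cancel, and this is the derivative of `p(τ) e^{−λ(t−τ)}`. So the integral equals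
`1 + t² − e^{−λt}`, and the equation reduces to an identity of rational expressions.
-/

open MeasureTheory Set intervalIntegral

theorem hasDerivAt_mul_exp_neg_mul_sub {p : ℝ → ℝ} {p' lam t τ : ℝ} (hp : HasDerivAt p p' τ) :
    HasDerivAt (fun σ => p σ * Real.exp (-lam * (t - σ)))
      ((p' + lam * p τ) * Real.exp (-lam * (t - τ))) τ := by
  have hexp : HasDerivAt (fun σ => Real.exp (-lam * (t - σ)))
      (Real.exp (-lam * (t - τ)) * lam) τ := by
    simpa using (((hasDerivAt_id τ).const_sub t).const_mul (-lam)).exp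
  exact (hp.mul hexp).congr_deriv (by ring)

/-- Variation of constants for `y' = -λ y + f`: the integral of `(p' + λp)` against the kernel
`e^{−λ(b−τ)}` telescopes. -/
theorem integral_deriv_add_mul_mul_exp {p p' : ℝ → ℝ} {a b : ℝ} (lam : ℝ)
    (hp : ∀ τ ∈ uIcc a b, HasDerivAt p (p' τ) τ) (hp' : IntervalIntegrable p' volume a b) :
    ∫ τ in a..b, (p' τ + lam * p τ) * Real.exp (-lam * (b - τ)) =
      p b - p a * Real.exp (-lam * (b - a)) := by
  have hpc : ContinuousOn p (uIcc a b) := fun τ hτ => (hp τ hτ).continuousAt.continuousWithinAt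
  have hint : IntervalIntegrable (fun τ => (p' τ + lam * p τ) * Real.exp (-lam * (b - τ)))
      volume a b :=
    (hp'.add (hpc.intervalIntegrable.const_mul lam)).mul_continuousOn (by fun_prop)
  rw [integral_eq_sub_of_hasDerivAt (fun τ hτ => hasDerivAt_mul_exp_neg_mul_sub (hp τ hτ)) hint]
  simp

theorem volterra_nonlocal_example_general
    (lam T : ℝ) (r : ℝ → ℝ)
    (hr : r = fun t => (lam + 2 * t + lam * t ^ 2) / (1 + Real.sin t ^ 2)) :
    ∀ t ∈ Icc 0 T,
      r t = (2 * t + lam * Real.exp (-lam * t)) / (1 + Real.sin t ^ 2) +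
        (lam / (1 + Real.sin t ^ 2)) *
          ∫ τ in (0:ℝ)..t,
            (1 + Real.sin τ ^ 2) * Real.exp (-lam * (t - τ)) * r τ := by
  intro t _
  have hp : ∀ τ : ℝ, HasDerivAt (fun σ : ℝ => 1 + σ ^ 2) (2 * τ) τ := fun τ => by
    simpa using (hasDerivAt_pow 2 τ).const_add 1
  have hintegrand : ∀ τ : ℝ, (1 + Real.sin τ ^ 2) * Real.exp (-lam * (t - τ)) * r τ =
      (2 * τ + lam * (1 + τ ^ 2)) * Real.exp (-lam * (t - τ)) := fun τ => by
    have : 1 + Real.sin τ ^ 2 ≠ 0 := by positivity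
    rw [hr]
    field_simp
    ring
  have hintegral : ∫ τ in (0:ℝ)..t, (1 + Real.sin τ ^ 2) * Real.exp (-lam * (t - τ)) * r τ =
      1 + t ^ 2 - Real.exp (-lam * t) := by
    simp_rw [hintegrand]
    rw [integral_deriv_add_mul_mul_exp lam (fun τ _ => hp τ)
      ((continuous_const_mul 2).intervalIntegrable 0 t)]
    simp
  have : 1 + Real.sin t ^ 2 ≠ 0 := by positivity
  rw [hintegral, hr]
  field_simp
  ring

/-- `r(t) = (λ + 2t + λt²)/(1 + sin²t)` solves the second-kind Volterra
integral equation
`r(t) = (2t + λe^{−λt})/(1 + sin²t)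
  + (λ/(1 + sin²t))·∫₀ᵗ (1 + sin²τ) e^{−λ(t−τ)} r(τ) dτ` on `[0,T]`. -/
theorem volterra_nonlocal_example
    (lam T : ℝ) (hlam : 0 < lam) (hT : 0 < T) (r : ℝ → ℝ)
    (hr : r = fun t => (lam + 2 * t + lam * t ^ 2) / (1 + Real.sin t ^ 2)) :
    ∀ t ∈ Icc 0 T,
      r t = (2 * t + lam * Real.exp (-lam * t)) / (1 + Real.sin t ^ 2) +
        (lam / (1 + Real.sin t ^ 2)) *
          ∫ τ in (0:ℝ)..t,
            (1 + Real.sin τ ^ 2) * Real.exp (-lam * (t - τ)) * r τ :=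
  volterra_nonlocal_example_general lam T r hr
end

section
/- Let T > 0, let 0 < t₀ ≤ T, let λ₁ > 0, and let (λ_k)_{k≥1} be reals with λ_k ≥ λ₁ for all k. Let p : [0,T] → ℝ be continuous and set M = max{ exp(∫_τᵗ p(y)dy) : 0 ≤ τ ≤ t ≤ T }. Let (φ_k)_{k≥1} be a square-summable real sequence and let f_k : [0,T] → ℝ (k ≥ 1) be continuous functions with Σ_{k=1}^∞ ∫₀ᵀ f_k(τ)² dτ < ∞. Define u_k(t) = φ_k·exp(−λ_k t + ∫₀ᵗ p(τ)dτ) + ∫₀ᵗ f_k(τ)·exp(−λ_k(t−τ) + ∫_τᵗ p(y)dy) dτ. Then for every t with t₀ ≤ t ≤ T: Σ_{k=1}^∞ λ_k·u_k(t)² ≤ (2M²/(t₀² e² λ₁))·Σ_{k=1}^∞ φ_k² + 2M²·Σ_{k=1}^∞ ∫₀ᵀ f_k(τ)² dτ. -/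
/-!
Write each coefficient as `u_k(t) = a + b`, with `a` the damped initial datum and `b` the Duhamel
integral, and use `λ(a + b)² ≤ 2λa² + 2λb²`. Both carry the factor `exp (∫_τ^t p) ≤ M`. For `a`,
the peak value `λt e^{-λt} ≤ e⁻¹` gives `λ e^{-2λt} ≤ 1 / (t₀² e² λ₁)`. For `b`, Cauchy–Schwarz
against the majorant `M e^{-λ(t-τ)}` of the kernel, with `∫₀ᵗ e^{-2λ(t-τ)} dτ ≤ 1 / (2λ)`, gives
`2λb² ≤ M² ∫₀ᵀ f_k²`. Summing over `k` is then a comparison of series.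
-/

open MeasureTheory Set intervalIntegral Real

theorem intervalIntegral.sq_integral_mul_le {a b : ℝ} (hab : a ≤ b) {f g : ℝ → ℝ}
    (hf : IntervalIntegrable (fun x => f x ^ 2) volume a b)
    (hg : IntervalIntegrable (fun x => g x ^ 2) volume a b)
    (hfg : IntervalIntegrable (fun x => f x * g x) volume a b) :
    (∫ x in a..b, f x * g x) ^ 2 ≤ (∫ x in a..b, f x ^ 2) * ∫ x in a..b, g x ^ 2 := by
  set A := ∫ x in a..b, f x ^ 2
  set B := ∫ x in a..b, f x * g x
  set C := ∫ x in a..b, g x ^ 2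
  -- the quadratic `c ↦ ∫ (c f - g)²` is nonnegative, so its discriminant is nonpositive
  have hquad : ∀ c : ℝ, 0 ≤ A * (c * c) + (-2 * B) * c + C := by
    intro c
    have hexpand : ∫ x in a..b, (c * f x - g x) ^ 2 = A * (c * c) + (-2 * B) * c + C := by
      simp_rw [show ∀ x, (c * f x - g x) ^ 2 = c * c * f x ^ 2 - 2 * c * (f x * g x) + g x ^ 2
        from fun x => by ring]
      rw [integral_add ((hf.const_mul _).sub (hfg.const_mul _)) hg,
        integral_sub (hf.const_mul _) (hfg.const_mul _), integral_const_mul, integral_const_mul]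
      ring
    exact hexpand ▸ integral_nonneg hab fun x _ => sq_nonneg _
  have hdiscr := discrim_le_zero hquad
  rw [discrim] at hdiscr
  linarith

theorem mul_exp_neg_mul_sq_le {lam t : ℝ} (hlam : 0 < lam) (ht : 0 < t) :
    lam * exp (-lam * t) ^ 2 ≤ 1 / (t ^ 2 * exp 1 ^ 2 * lam) := by
  have hpeak : lam * t * exp (-(lam * t)) * exp 1 ≤ 1 := by
    calc lam * t * exp (-(lam * t)) * exp 1 ≤ exp (-1) * exp 1 := by
          gcongr; exact mul_exp_neg_le_exp_neg_one _
      _ = 1 := by rw [← exp_add]; simp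
  rw [le_div_iff₀ (by positivity)]
  calc lam * exp (-lam * t) ^ 2 * (t ^ 2 * exp 1 ^ 2 * lam)
      = (lam * t * exp (-(lam * t)) * exp 1) ^ 2 := by ring_nf
    _ ≤ 1 := pow_le_one₀ (by positivity) hpeak

theorem integral_exp_neg_mul_sub_sq_le {lam : ℝ} (hlam : 0 < lam) (t : ℝ) :
    ∫ τ in (0 : ℝ)..t, exp (-lam * (t - τ)) ^ 2 ≤ 1 / (2 * lam) := by
  have hsq : ∀ s, exp (-lam * s) ^ 2 = exp (-(2 * lam) * s) := fun s => by
    rw [← exp_nat_mul]; ring_nf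
  calc ∫ τ in (0 : ℝ)..t, exp (-lam * (t - τ)) ^ 2
      = ∫ s in (0 : ℝ)..t, exp (-(2 * lam) * s) := by
        have hshift := integral_comp_sub_left (fun s => exp (-(2 * lam) * s)) t (a := 0) (b := t)
        simp only [sub_self, sub_zero] at hshift
        simp_rw [hsq, hshift]
    _ = (1 - exp (-(2 * lam) * t)) / (2 * lam) := by
        rw [integral_comp_mul_left (fun s => exp s) (by linarith : -(2 * lam) ≠ 0),
          integral_exp, smul_eq_mul, mul_zero, exp_zero]
        field_simp
        ring
    _ ≤ 1 / (2 * lam) := by gcongr; linarith [exp_pos (-(2 * lam) * t)]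

theorem sq_integral_mul_le_of_abs_le_exp {f K : ℝ → ℝ} {lam M t : ℝ} (hlam : 0 < lam)
    (ht : 0 ≤ t) (hf : ContinuousOn f (Icc 0 t))
    (hK : ∀ τ ∈ Icc 0 t, |K τ| ≤ M * exp (-lam * (t - τ))) :
    2 * lam * (∫ τ in (0 : ℝ)..t, f τ * K τ) ^ 2 ≤ M ^ 2 * ∫ τ in (0 : ℝ)..t, f τ ^ 2 := by
  have hint : ∀ g : ℝ → ℝ, ContinuousOn g (Icc 0 t) → IntervalIntegrable g volume 0 t :=
    fun g hg => hg.intervalIntegrable_of_Icc ht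
  set E := fun τ => M * exp (-lam * (t - τ))
  have hE : ContinuousOn E (Icc 0 t) := by fun_prop
  have habs : |∫ τ in (0 : ℝ)..t, f τ * K τ| ≤ ∫ τ in (0 : ℝ)..t, |f τ| * E τ :=
    norm_integral_le_of_norm_le ht
      (ae_of_all _ fun τ hτ => by
        rw [Real.norm_eq_abs, abs_mul]
        exact mul_le_mul_of_nonneg_left (hK τ (Ioc_subset_Icc_self hτ)) (abs_nonneg _))
      (hint _ (hf.abs.mul hE))
  have hcs : (∫ τ in (0 : ℝ)..t, |f τ| * E τ) ^ 2
      ≤ (∫ τ in (0 : ℝ)..t, f τ ^ 2) * ∫ τ in (0 : ℝ)..t, E τ ^ 2 := by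
    simpa only [sq_abs] using
      sq_integral_mul_le ht (hint _ (hf.abs.pow 2)) (hint _ (hE.pow 2)) (hint _ (hf.abs.mul hE))
  have hE_sq : ∫ τ in (0 : ℝ)..t, E τ ^ 2 ≤ M ^ 2 * (1 / (2 * lam)) := by
    simp_rw [E, mul_pow, intervalIntegral.integral_const_mul]
    gcongr
    exact integral_exp_neg_mul_sub_sq_le hlam t
  have hf_sq : 0 ≤ ∫ τ in (0 : ℝ)..t, f τ ^ 2 := integral_nonneg ht fun τ _ => sq_nonneg _
  calc 2 * lam * (∫ τ in (0 : ℝ)..t, f τ * K τ) ^ 2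
      = 2 * lam * |∫ τ in (0 : ℝ)..t, f τ * K τ| ^ 2 := by rw [sq_abs]
    _ ≤ 2 * lam * (∫ τ in (0 : ℝ)..t, |f τ| * E τ) ^ 2 := by gcongr
    _ ≤ 2 * lam * ((∫ τ in (0 : ℝ)..t, f τ ^ 2) * ∫ τ in (0 : ℝ)..t, E τ ^ 2) := by gcongr
    _ ≤ 2 * lam * ((∫ τ in (0 : ℝ)..t, f τ ^ 2) * (M ^ 2 * (1 / (2 * lam)))) := by gcongr
    _ = M ^ 2 * ∫ τ in (0 : ℝ)..t, f τ ^ 2 := by field_simp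

theorem mul_sq_initial_term_le {lam lam₁ t t₀ M φ P : ℝ} (hlam₁ : 0 < lam₁) (hlam : lam₁ ≤ lam)
    (ht₀ : 0 < t₀) (ht₀t : t₀ ≤ t) (hP : exp P ≤ M) :
    2 * lam * (φ * exp (-lam * t + P)) ^ 2 ≤ 2 * M ^ 2 / (t₀ ^ 2 * exp 1 ^ 2 * lam₁) * φ ^ 2 := by
  have hdecay : lam * exp (-lam * t) ^ 2 ≤ 1 / (t₀ ^ 2 * exp 1 ^ 2 * lam₁) :=
    (mul_exp_neg_mul_sq_le (hlam₁.trans_le hlam) (ht₀.trans_le ht₀t)).trans (by gcongr)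
  calc 2 * lam * (φ * exp (-lam * t + P)) ^ 2
      = 2 * φ ^ 2 * (lam * exp (-lam * t) ^ 2) * exp P ^ 2 := by rw [exp_add]; ring
    _ ≤ 2 * φ ^ 2 * (1 / (t₀ ^ 2 * exp 1 ^ 2 * lam₁)) * M ^ 2 := by gcongr
    _ = 2 * M ^ 2 / (t₀ ^ 2 * exp 1 ^ 2 * lam₁) * φ ^ 2 := by ring

theorem mul_sq_duhamel_term_le {lam t T M : ℝ} {p f : ℝ → ℝ} (hlam : 0 < lam) (ht : 0 ≤ t)
    (htT : t ≤ T) (hM : ∀ τ, 0 ≤ τ → τ ≤ t → exp (∫ y in τ..t, p y) ≤ M)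
    (hf : ContinuousOn f (Icc 0 T)) :
    2 * lam * (∫ τ in (0 : ℝ)..t, f τ * exp (-lam * (t - τ) + ∫ y in τ..t, p y)) ^ 2
      ≤ M ^ 2 * ∫ τ in (0 : ℝ)..T, f τ ^ 2 := by
  have hkernel : ∀ τ ∈ Icc 0 t,
      |exp (-lam * (t - τ) + ∫ y in τ..t, p y)| ≤ M * exp (-lam * (t - τ)) := fun τ hτ => by
    rw [abs_of_pos (exp_pos _), exp_add, mul_comm]
    exact mul_le_mul_of_nonneg_right (hM τ hτ.1 hτ.2) (exp_pos _).le
  have hmono : ∫ τ in (0 : ℝ)..t, f τ ^ 2 ≤ ∫ τ in (0 : ℝ)..T, f τ ^ 2 :=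
    integral_mono_interval le_rfl ht htT (ae_of_all _ fun τ => sq_nonneg (f τ))
      ((hf.pow 2).intervalIntegrable_of_Icc (ht.trans htT))
  calc _ ≤ M ^ 2 * ∫ τ in (0 : ℝ)..t, f τ ^ 2 :=
        sq_integral_mul_le_of_abs_le_exp hlam ht (hf.mono (Icc_subset_Icc_right htT)) hkernel
    _ ≤ M ^ 2 * ∫ τ in (0 : ℝ)..T, f τ ^ 2 := by gcongr

theorem summable_and_tsum_le_of_le_add {ι : Type*} {a x y : ι → ℝ} {c d : ℝ}
    (ha : ∀ k, 0 ≤ a k) (hle : ∀ k, a k ≤ c * x k + d * y k) (hx : Summable x)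
    (hy : Summable y) :
    Summable a ∧ ∑' k, a k ≤ c * ∑' k, x k + d * ∑' k, y k := by
  have hxy : Summable fun k => c * x k + d * y k := (hx.mul_left c).add (hy.mul_left d)
  have hsum : Summable a := hxy.of_nonneg_of_le ha hle
  refine ⟨hsum, ?_⟩
  rw [← tsum_mul_left, ← tsum_mul_left, ← (hx.mul_left c).tsum_add (hy.mul_left d)]
  exact hsum.tsum_le_tsum hle hxy

theorem series_solution_Hs_bound_general
    (T t₀ lam₁ : ℝ) (ht₀ : 0 < t₀)
    (hlam₁ : 0 < lam₁)
    (lam : ℕ → ℝ) (hlam : ∀ k, lam₁ ≤ lam k)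
    (p : ℝ → ℝ)
    (M : ℝ)
    (hM : ∀ τ t : ℝ, 0 ≤ τ → τ ≤ t → t ≤ T →
      Real.exp (∫ y in τ..t, p y) ≤ M)
    (φ : ℕ → ℝ) (hφ : Summable (fun k => (φ k) ^ 2))
    (f : ℕ → ℝ → ℝ) (hf : ∀ k, ContinuousOn (f k) (Icc 0 T))
    (hF : Summable (fun k => ∫ τ in (0:ℝ)..T, (f k τ) ^ 2))
    (u : ℕ → ℝ → ℝ)
    (hu : u = fun k t =>
      φ k * Real.exp (-lam k * t + ∫ τ in (0:ℝ)..t, p τ) +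
      ∫ τ in (0:ℝ)..t, f k τ * Real.exp (-lam k * (t - τ) + ∫ y in τ..t, p y)) :
    ∀ t, t₀ ≤ t → t ≤ T →
      Summable (fun k => lam k * (u k t) ^ 2) ∧
      ∑' k, lam k * (u k t) ^ 2 ≤
        (2 * M ^ 2 / (t₀ ^ 2 * Real.exp 1 ^ 2 * lam₁)) * ∑' k, (φ k) ^ 2 +
        2 * M ^ 2 * ∑' k, ∫ τ in (0:ℝ)..T, (f k τ) ^ 2 := by
  intro t ht₀t htT
  have ht : 0 ≤ t := (ht₀.trans_le ht₀t).le
  refine summable_and_tsum_le_of_le_add (fun k => ?_) (fun k => ?_) hφ hF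
  · exact mul_nonneg (hlam₁.trans_le (hlam k)).le (sq_nonneg _)
  · have hlamk : 0 < lam k := hlam₁.trans_le (hlam k)
    set a := φ k * exp (-lam k * t + ∫ τ in (0:ℝ)..t, p τ)
    set b := ∫ τ in (0:ℝ)..t, f k τ * exp (-lam k * (t - τ) + ∫ y in τ..t, p y)
    have hinitial : 2 * lam k * a ^ 2 ≤ 2 * M ^ 2 / (t₀ ^ 2 * exp 1 ^ 2 * lam₁) * φ k ^ 2 :=
      mul_sq_initial_term_le hlam₁ (hlam k) ht₀ ht₀t (hM 0 t le_rfl ht htT)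
    have hduhamel : 2 * lam k * b ^ 2 ≤ M ^ 2 * ∫ τ in (0:ℝ)..T, f k τ ^ 2 :=
      mul_sq_duhamel_term_le hlamk ht htT (fun τ h0 hτ => hM τ t h0 hτ htT) (hf k)
    have hF_nonneg : 0 ≤ M ^ 2 * ∫ τ in (0:ℝ)..T, f k τ ^ 2 :=
      mul_nonneg (sq_nonneg M) (integral_nonneg (ht.trans htT) fun τ _ => sq_nonneg _)
    calc lam k * u k t ^ 2 ≤ lam k * (2 * (a ^ 2 + b ^ 2)) := by
          rw [hu]; gcongr; exact add_sq_le
      _ = 2 * lam k * a ^ 2 + 2 * lam k * b ^ 2 := by ring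
      _ ≤ _ := by linarith

/-- Weighted (`ℍ₀ˢ`-norm) bound for the eigenfunction coefficients of the
series solution of `∂_t u + (−Δ)^s u = p(t)u + f`: for `t ∈ [t₀,T]`,
`Σ_k λ_k u_k(t)² ≤ (2M²/(t₀²e²λ₁)) Σ_k φ_k² + 2M² Σ_k ∫₀ᵀ f_k²`. -/
theorem series_solution_Hs_bound
    (T t₀ lam₁ : ℝ) (hT : 0 < T) (ht₀ : 0 < t₀) (ht₀T : t₀ ≤ T)
    (hlam₁ : 0 < lam₁)
    (lam : ℕ → ℝ) (hlam : ∀ k, lam₁ ≤ lam k)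
    (p : ℝ → ℝ) (hp : ContinuousOn p (Icc 0 T))
    (M : ℝ)
    (hM : ∀ τ t : ℝ, 0 ≤ τ → τ ≤ t → t ≤ T →
      Real.exp (∫ y in τ..t, p y) ≤ M)
    (φ : ℕ → ℝ) (hφ : Summable (fun k => (φ k) ^ 2))
    (f : ℕ → ℝ → ℝ) (hf : ∀ k, ContinuousOn (f k) (Icc 0 T))
    (hF : Summable (fun k => ∫ τ in (0:ℝ)..T, (f k τ) ^ 2))
    (u : ℕ → ℝ → ℝ)
    (hu : u = fun k t =>
      φ k * Real.exp (-lam k * t + ∫ τ in (0:ℝ)..t, p τ) +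
      ∫ τ in (0:ℝ)..t, f k τ * Real.exp (-lam k * (t - τ) + ∫ y in τ..t, p y)) :
    ∀ t, t₀ ≤ t → t ≤ T →
      Summable (fun k => lam k * (u k t) ^ 2) ∧
      ∑' k, lam k * (u k t) ^ 2 ≤
        (2 * M ^ 2 / (t₀ ^ 2 * Real.exp 1 ^ 2 * lam₁)) * ∑' k, (φ k) ^ 2 +
        2 * M ^ 2 * ∑' k, ∫ τ in (0:ℝ)..T, (f k τ) ^ 2 :=
  series_solution_Hs_bound_general T t₀ lam₁ ht₀ hlam₁ lam hlam p M hM φ hφ f hf hF u hu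
end
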